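/- Let N ≥ 2 be an integer and x a fixed basis index. Then for all t ∈ ℝ, ⟨x| exp(−it·H_x²) |s⟩ = (1+1/√N)/2 − e^{−4it/N}·(1−1/√N)/2. Consequently, |⟨x| exp(−it·H_x²) |s⟩|² ≥ sin²(2t/N) for all 0 ≤ t ≤ (π/4)N, and exp(−i·(π/4)N·H_x²)|s⟩ = |x⟩. -/

import Mathlib

/-!
Put `c = ⟨x|s⟩ = 1/√N`. The Grover Hamiltonian `H = (1 + c)·I − |x⟩⟨x| − |s⟩⟨s|` has the
eigenvectors `|x⟩ + |s⟩` and `|x⟩ − |s⟩` with eigenvalues `0` and `2c`, so `H²` has eigenvalues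
`0` and `4/N` on them. Writing `|s⟩ = ½(|x⟩ + |s⟩) − ½(|x⟩ − |s⟩)` gives
`exp(−itH²)|s⟩ = ½(|x⟩ + |s⟩) − ½ e^{−4it/N} (|x⟩ − |s⟩)`, whence the amplitude; its squared
modulus is `sin²(2t/N) + cos²(2t/N)/N`, and at `t = πN/4` the phase `e^{−4it/N}` is `−1`.
-/

open Matrix

namespace Matrix

variable {n : Type*} [Fintype n] [DecidableEq n]

theorem pow_mulVec_of_mulVec_eq_smul {R : Type*} [CommSemiring R] {A : Matrix n n R}
    {v : n → R} {μ : R} (h : A *ᵥ v = μ • v) (k : ℕ) : (A ^ k) *ᵥ v = μ ^ k • v := by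
  induction k with
  | zero => simp
  | succ k ih => rw [pow_succ', ← mulVec_mulVec, ih, mulVec_smul, h, smul_smul, pow_succ]

theorem exp_mulVec_of_mulVec_eq_smul {𝕂 : Type*} [RCLike 𝕂] {A : Matrix n n 𝕂} {v : n → 𝕂}
    {μ : 𝕂} (h : A *ᵥ v = μ • v) : NormedSpace.exp A *ᵥ v = NormedSpace.exp μ • v := by
  have hterm (k : ℕ) : ((k.factorial : 𝕂)⁻¹ • A ^ k) *ᵥ v = ((k.factorial : 𝕂)⁻¹ • μ ^ k) • v := by
    rw [smul_mulVec, pow_mulVec_of_mulVec_eq_smul h, smul_smul, smul_eq_mul]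
  -- Any algebra norm on matrices makes the exponential series converge; `exp` itself is norm-free.
  open scoped Norms.Operator in
  have hA := (NormedSpace.exp_series_hasSum_exp' (𝕂 := 𝕂) A).map (mulVec.addMonoidHomLeft v)
    (continuous_id.matrix_mulVec continuous_const)
  simp only [Function.comp_def, mulVec.addMonoidHomLeft, AddMonoidHom.coe_mk, ZeroHom.coe_mk,
    hterm] at hA
  exact hA.unique ((NormedSpace.exp_series_hasSum_exp' μ).smul_const v)

variable {R : Type*} [CommRing R] [StarRing R]

def groverHamiltonian (a : R) (x s : n → R) : Matrix n n R :=
  a • 1 - vecMulVec x (star x) - vecMulVec s (star s)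

theorem groverHamiltonian_mulVec (a : R) (x s v : n → R) :
    groverHamiltonian a x s *ᵥ v = a • v - (star x ⬝ᵥ v) • x - (star s ⬝ᵥ v) • s := by
  simp only [groverHamiltonian, sub_mulVec, smul_mulVec, one_mulVec, vecMulVec_mulVec,
    op_smul_eq_smul]

theorem groverHamiltonian_mulVec_add {x s : n → R} {c : R} (hx : star x ⬝ᵥ x = 1)
    (hs : star s ⬝ᵥ s = 1) (hxs : star x ⬝ᵥ s = c) (hsx : star s ⬝ᵥ x = c) :
    groverHamiltonian (1 + c) x s *ᵥ (x + s) = 0 := by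
  rw [groverHamiltonian_mulVec, dotProduct_add, dotProduct_add, hx, hs, hxs, hsx]
  module

theorem groverHamiltonian_mulVec_sub {x s : n → R} {c : R} (hx : star x ⬝ᵥ x = 1)
    (hs : star s ⬝ᵥ s = 1) (hxs : star x ⬝ᵥ s = c) (hsx : star s ⬝ᵥ x = c) :
    groverHamiltonian (1 + c) x s *ᵥ (x - s) = (2 * c) • (x - s) := by
  rw [groverHamiltonian_mulVec, dotProduct_sub, dotProduct_sub, hx, hs, hxs, hsx]
  module

section RCLike

variable {𝕂 : Type*} [RCLike 𝕂] {x s : n → 𝕂} {c : 𝕂}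

theorem exp_smul_groverHamiltonian_sq_mulVec (hx : star x ⬝ᵥ x = 1) (hs : star s ⬝ᵥ s = 1)
    (hxs : star x ⬝ᵥ s = c) (hsx : star s ⬝ᵥ x = c) (τ : 𝕂) :
    NormedSpace.exp (τ • groverHamiltonian (1 + c) x s ^ 2) *ᵥ s =
      (2⁻¹ : 𝕂) • (x + s) - (2⁻¹ * NormedSpace.exp (4 * c ^ 2 * τ)) • (x - s) := by
  have h₀ : (τ • groverHamiltonian (1 + c) x s ^ 2) *ᵥ (x + s) = (0 : 𝕂) • (x + s) := by
    rw [smul_mulVec, pow_mulVec_of_mulVec_eq_smul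
      ((groverHamiltonian_mulVec_add hx hs hxs hsx).trans (zero_smul 𝕂 _).symm)]
    simp
  have h₁ : (τ • groverHamiltonian (1 + c) x s ^ 2) *ᵥ (x - s) = (4 * c ^ 2 * τ) • (x - s) := by
    rw [smul_mulVec, pow_mulVec_of_mulVec_eq_smul (groverHamiltonian_mulVec_sub hx hs hxs hsx),
      smul_smul]
    ring_nf
  calc NormedSpace.exp (τ • groverHamiltonian (1 + c) x s ^ 2) *ᵥ s
      = NormedSpace.exp (τ • groverHamiltonian (1 + c) x s ^ 2) *ᵥ
          ((2⁻¹ : 𝕂) • (x + s) - (2⁻¹ : 𝕂) • (x - s)) := by congr 1; module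
    _ = _ := by
      rw [mulVec_sub, mulVec_smul, mulVec_smul, exp_mulVec_of_mulVec_eq_smul h₀,
        exp_mulVec_of_mulVec_eq_smul h₁, NormedSpace.exp_zero]
      module

theorem dotProduct_exp_smul_groverHamiltonian_sq_mulVec (hx : star x ⬝ᵥ x = 1)
    (hs : star s ⬝ᵥ s = 1) (hxs : star x ⬝ᵥ s = c) (hsx : star s ⬝ᵥ x = c) (τ : 𝕂) :
    star x ⬝ᵥ (NormedSpace.exp (τ • groverHamiltonian (1 + c) x s ^ 2) *ᵥ s) =
      (1 + c) / 2 - NormedSpace.exp (4 * c ^ 2 * τ) * ((1 - c) / 2) := by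
  rw [exp_smul_groverHamiltonian_sq_mulVec hx hs hxs hsx, dotProduct_sub, dotProduct_smul,
    dotProduct_smul, dotProduct_add, dotProduct_sub, hx, hxs, smul_eq_mul, smul_eq_mul]
  ring

end RCLike

end Matrix

namespace Complex

theorem norm_ofReal_sub_exp_two_mul_I_mul_ofReal_sq (a b u : ℝ) :
    ‖(a : ℂ) - exp (2 * u * I) * b‖ ^ 2 = (a - b) ^ 2 + 4 * a * b * Real.sin u ^ 2 := by
  have h : (a : ℂ) - exp (2 * u * I) * b =
      ↑(a - Real.cos (2 * u) * b) + ↑(-(Real.sin (2 * u) * b)) * I := by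
    rw [exp_mul_I]; push_cast; ring
  rw [h, Complex.sq_norm, normSq_add_mul_I]
  linear_combination b ^ 2 * Real.sin_sq_add_cos_sq (2 * u) -
    2 * a * b * Real.cos_two_mul_eq_one_sub u

theorem sin_sq_le_norm_half_add_sub_exp_two_mul_I_mul_half_sub_sq (r u : ℝ) :
    Real.sin u ^ 2 ≤ ‖(((1 + r) / 2 : ℝ) : ℂ) - exp (2 * u * I) * (((1 - r) / 2 : ℝ) : ℂ)‖ ^ 2 := by
  rw [norm_ofReal_sub_exp_two_mul_I_mul_ofReal_sq]
  nlinarith [mul_nonneg (sq_nonneg r) (sq_nonneg (Real.cos u)), Real.sin_sq_add_cos_sq u]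

end Complex

theorem grover_squared_time_evolution_general (N : ℕ) (x : Fin N) :
    let ketx : Fin N → ℂ := fun i => if i = x then 1 else 0
    let kets : Fin N → ℂ := fun _ => ((Real.sqrt N : ℝ) : ℂ)⁻¹
    let Hx : Matrix (Fin N) (Fin N) ℂ :=
      ((1 + (Real.sqrt N)⁻¹ : ℝ) : ℂ) • 1 -
        Matrix.vecMulVec ketx (star ketx) - Matrix.vecMulVec kets (star kets)
    (∀ t : ℝ,
      star ketx ⬝ᵥ ((NormedSpace.exp ((-Complex.I * (t : ℂ)) • (Hx ^ 2))) *ᵥ kets) =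
        (((1 + (Real.sqrt N)⁻¹) / 2 : ℝ) : ℂ) -
          Complex.exp (-4 * Complex.I * (t : ℂ) / (N : ℂ)) *
            (((1 - (Real.sqrt N)⁻¹) / 2 : ℝ) : ℂ)) ∧
    (∀ t : ℝ, 0 ≤ t → t ≤ Real.pi / 4 * N →
      Real.sin (2 * t / N) ^ 2 ≤
        ‖star ketx ⬝ᵥ ((NormedSpace.exp ((-Complex.I * (t : ℂ)) • (Hx ^ 2))) *ᵥ kets)‖ ^ 2) ∧
    ((NormedSpace.exp
        ((-Complex.I * ((Real.pi / 4 * N : ℝ) : ℂ)) • (Hx ^ 2))) *ᵥ kets = ketx) := by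
  intro ketx kets Hx
  have hN : (N : ℂ) ≠ 0 := Nat.cast_ne_zero.2 x.pos.ne'
  set c : ℂ := ((Real.sqrt N : ℝ) : ℂ)⁻¹ with hc
  have hc2 : c ^ 2 = (N : ℂ)⁻¹ := by
    rw [hc, inv_pow, ← Complex.ofReal_pow, Real.sq_sqrt N.cast_nonneg, Complex.ofReal_natCast]
  have hHx : Hx = groverHamiltonian (1 + c) ketx kets := by
    simp only [Hx, groverHamiltonian, hc]
    push_cast
    rfl
  have hxx : star ketx ⬝ᵥ ketx = 1 := by simp [ketx, dotProduct]
  have hss : star kets ⬝ᵥ kets = 1 := by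
    have hcstar : star c = c := by simp [hc]
    simp [kets, dotProduct, ← hc, hcstar, ← sq, hc2, hN]
  have hxs : star ketx ⬝ᵥ kets = c := by simp [ketx, kets, dotProduct, hc]
  have hsx : star kets ⬝ᵥ ketx = c := by simp [ketx, kets, dotProduct, hc]
  have hphase (t : ℝ) : NormedSpace.exp (4 * c ^ 2 * (-Complex.I * t)) =
      Complex.exp (-4 * Complex.I * t / N) := by
    rw [← Complex.exp_eq_exp_ℂ, hc2]
    ring_nf
  have hamp := dotProduct_exp_smul_groverHamiltonian_sq_mulVec hxx hss hxs hsx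
  refine ⟨fun t => ?_, fun t _ _ => ?_, ?_⟩
  · rw [hHx, hamp, hphase, hc]
    push_cast
    ring
  · rw [hHx, hamp, hphase, hc,
      show -4 * Complex.I * t / N = 2 * ↑(-(2 * t / N)) * Complex.I by push_cast; ring]
    simpa using Complex.sin_sq_le_norm_half_add_sub_exp_two_mul_I_mul_half_sub_sq
      (Real.sqrt N)⁻¹ (-(2 * t / N))
  · rw [hHx, exp_smul_groverHamiltonian_sq_mulVec hxx hss hxs hsx, hphase,
      show -4 * Complex.I * ↑(Real.pi / 4 * N) / N = -(Real.pi * Complex.I) by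
        push_cast; field_simp,
      Complex.exp_neg, Complex.exp_pi_mul_I]
    module

/-- Time evolution under the square of the Grover Hamiltonian
`H_x = (1 + 1/√N)·I − |x⟩⟨x| − |s⟩⟨s|`:
`⟨x| exp(−it H_x²) |s⟩ = (1+1/√N)/2 − e^{−4it/N}(1−1/√N)/2`, hence
`|⟨x| exp(−it H_x²) |s⟩|² ≥ sin²(2t/N)` for `0 ≤ t ≤ (π/4)N`, and
`exp(−i(π/4)N·H_x²)|s⟩ = |x⟩`. -/
theorem grover_squared_time_evolution (N : ℕ) (hN : 2 ≤ N) (x : Fin N) :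
    let ketx : Fin N → ℂ := fun i => if i = x then 1 else 0
    let kets : Fin N → ℂ := fun _ => ((Real.sqrt N : ℝ) : ℂ)⁻¹
    let Hx : Matrix (Fin N) (Fin N) ℂ :=
      ((1 + (Real.sqrt N)⁻¹ : ℝ) : ℂ) • 1 -
        Matrix.vecMulVec ketx (star ketx) - Matrix.vecMulVec kets (star kets)
    (∀ t : ℝ,
      star ketx ⬝ᵥ ((NormedSpace.exp ((-Complex.I * (t : ℂ)) • (Hx ^ 2))) *ᵥ kets) =
        (((1 + (Real.sqrt N)⁻¹) / 2 : ℝ) : ℂ) -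
          Complex.exp (-4 * Complex.I * (t : ℂ) / (N : ℂ)) *
            (((1 - (Real.sqrt N)⁻¹) / 2 : ℝ) : ℂ)) ∧
    (∀ t : ℝ, 0 ≤ t → t ≤ Real.pi / 4 * N →
      Real.sin (2 * t / N) ^ 2 ≤
        ‖star ketx ⬝ᵥ ((NormedSpace.exp ((-Complex.I * (t : ℂ)) • (Hx ^ 2))) *ᵥ kets)‖ ^ 2) ∧
    ((NormedSpace.exp
        ((-Complex.I * ((Real.pi / 4 * N : ℝ) : ℂ)) • (Hx ^ 2))) *ᵥ kets = ketx) :=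
  grover_squared_time_evolution_general N x
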